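/- arXiv:1507.01776 — 3 statements merged into one kernel-verified Lean document; each statement's English description precedes it below -/
import Mathlib

section
/- Let D be a finite set and R ⊆ D^n a nonempty n-ary relation, and let 𝒟 = 𝒟(R) be the digraph constructed from R. Then R is a rigid core (i.e., the identity map on D is the only unary polymorphism of R) if and only if 𝒟 is a rigid core (i.e., the identity map on V^𝒟 is the only endomorphism of 𝒟). -/
open scoped NNRat

/-- A homomorphism between digraphs given by their edge relations. -/
def IsDigraphHom {V₁ V₂ : Type*} (E₁ : V₁ → V₁ → Prop) (E₂ : V₂ → V₂ → Prop)
    (h : V₁ → V₂) : Prop :=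
  ∀ a b, E₁ a b → E₂ (h a) (h b)

/-- Weak reachability (connectivity by oriented paths) in a digraph. -/
def WeakReach {V : Type*} (E : V → V → Prop) : V → V → Prop :=
  Relation.ReflTransGen fun a b => E a b ∨ E b a

/-- Edge relation of the direct power of a digraph. -/
def powEdge {V : Type*} (k : ℕ) (E : V → V → Prop) :
    (Fin k → V) → (Fin k → V) → Prop :=
  fun c d => ∀ i, E (c i) (d i)

/-- The directions of the edges of the oriented path `Q_S`: a single edge, then for
each `l` a single edge (if `l ∈ S`) or a zigzag (otherwise), then a single edge. -/
def QDirs (n : ℕ) (S : Finset (Fin n)) : List Bool :=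
  true :: (((List.finRange n).flatMap fun l =>
    if l ∈ S then [true] else [true, false, true]) ++ [true])

/-- The edge relation of the oriented path whose edge directions are given by `ds`;
its vertices are `0, …, ds.length`, `0` being initial and `ds.length` terminal. -/
def pathEdge (ds : List Bool) : Fin (ds.length + 1) → Fin (ds.length + 1) → Prop :=
  fun a b => ∃ i : Fin ds.length,
    if ds.get i = true then a = i.castSucc ∧ b = i.succ
    else a = i.succ ∧ b = i.castSucc

/-- The directions of the path `Q_{{i : d = r i}}` replacing the edge `(d, r)`. -/
def pathDirs {D : Type} [DecidableEq D] {n : ℕ} (d : D) (r : Fin n → D) : List Bool :=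
  QDirs n (Finset.univ.filter fun i => d = r i)

/-- Internal vertices of the copies of the paths `Q_{{i : d = r i}}` in `𝒟(R)`. -/
structure InnerVert (D : Type) [DecidableEq D] (n : ℕ) (R : Set (Fin n → D)) where
  d : D
  r : Fin n → D
  hr : r ∈ R
  j : ℕ
  hj0 : 0 < j
  hjlen : j < (pathDirs d r).length

/-- The vertex set of the digraph `𝒟(R)`: base vertices `D`, top vertices `R`, and
the internal vertices of the connecting oriented paths. -/
def DVert (D : Type) [DecidableEq D] (n : ℕ) (R : Set (Fin n → D)) : Type :=
  D ⊕ ({t : Fin n → D // t ∈ R} ⊕ InnerVert D n R)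

/-- The `j`-th vertex of the copy of the path `Q_{{i : d = t i}}` joining `d` to `t`. -/
def pathVert {D : Type} [DecidableEq D] {n : ℕ} {R : Set (Fin n → D)}
    (d : D) (t : Fin n → D) (ht : t ∈ R) (j : ℕ) : DVert D n R :=
  if hj0 : j = 0 then Sum.inl d
  else if hjl : (pathDirs d t).length ≤ j then Sum.inr (Sum.inl ⟨t, ht⟩)
  else Sum.inr (Sum.inr ⟨d, t, ht, j, Nat.pos_of_ne_zero hj0, not_le.mp hjl⟩)

/-- The edge relation of the digraph `𝒟(R)`. -/
def DEdge {D : Type} [DecidableEq D] {n : ℕ} {R : Set (Fin n → D)} :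
    DVert D n R → DVert D n R → Prop :=
  fun a b => ∃ (d : D) (t : Fin n → D) (ht : t ∈ R) (i : ℕ)
      (hi : i < (pathDirs d t).length),
    if (pathDirs d t).get ⟨i, hi⟩ = true then
      a = pathVert d t ht i ∧ b = pathVert d t ht (i + 1)
    else
      a = pathVert d t ht (i + 1) ∧ b = pathVert d t ht i

/-- A unary polymorphism of an `n`-ary relation `R`. -/
def IsUnaryPolymorphism {D : Type} {n : ℕ} (R : Set (Fin n → D)) (g : D → D) : Prop :=
  ∀ t ∈ R, (fun i => g (t i)) ∈ R

/-- The unary cost function `u` on the vertices of `𝒟(R)` associated to `ρ : R → ℚ≥0`. -/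
def uFun {D : Type} [DecidableEq D] {n : ℕ} {R : Set (Fin n → D)}
    (ρ : {t : Fin n → D // t ∈ R} → ℚ≥0) : DVert D n R → ℚ≥0 :=
  fun v => match v with
  | Sum.inl _ => 0
  | Sum.inr (Sum.inl t) => ρ t
  | Sum.inr (Sum.inr _) => 0

/-!
Every edge of `𝒟(R)` climbs one level: `D` sits at level `0`, `R` at level `n + 2`, inner vertices
strictly between. As `𝒟(R)` is weakly connected, an endomorphism `h` shifts levels by a constant,
which must be `0`; so `h` maps `D` into itself by some `g`, and maps the copy of `Q_S` from `d` to
`r` into a single copy of `Q_{S'}` from `g d` to some `r'`, by a path homomorphism fixing the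
initial vertex. Such a homomorphism `Q_S → Q_{S'}` forces `S ⊆ S'`, because a single edge cannot be
mapped onto a zigzag, and is the identity when `S = S'`. For the copy from `r i` to `r` we have
`i ∈ S`, so `g (r i) = r' i`: thus `g` is a polymorphism, and when `g = id` every copy is fixed
pointwise. Conversely, a polymorphism `g` extends to an endomorphism by folding zigzags of each
`Q_S` onto the single edges of `Q_{S'}`, `S' = {i : g d = g (r i)} ⊇ S`.
-/

lemma WeakReach.symm {V : Type*} {E : V → V → Prop} {a b : V} (h : WeakReach E a b) :
    WeakReach E b a := by
  induction h with
  | refl => exact .refl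
  | tail _ hbc ih => exact .head hbc.symm ih

lemma WeakReach.grade_sub_eq {V W : Type*} {E : V → V → Prop} {F : W → W → Prop} {φ : V → W}
    (ℓ : V → ℤ) (ℓ' : W → ℤ) (hE : ∀ a b, E a b → ℓ b = ℓ a + 1)
    (hF : ∀ a b, F a b → ℓ' b = ℓ' a + 1) (hφ : IsDigraphHom E F φ) {a b : V}
    (h : WeakReach E a b) : ℓ' (φ a) - ℓ a = ℓ' (φ b) - ℓ b := by
  induction h with
  | refl => rfl
  | tail _ hbc ih =>
    rw [ih]
    rcases hbc with hbc | hbc <;>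
      linarith [hE _ _ hbc, hF _ _ (hφ _ _ hbc)]

section OrientedPath

/-- The oriented path `pathEdge ds`, with positions in `ℕ` so that maps between paths are
functions `ℕ → ℕ`. -/
def PathAdj (ds : List Bool) (x y : ℕ) : Prop :=
  (ds[x]? = some true ∧ y = x + 1) ∨ (ds[y]? = some false ∧ x = y + 1)

def pathHeight (ds : List Bool) (j : ℕ) : ℤ :=
  ((ds.take j).map fun b => if b then 1 else -1).sum

variable {ds ds₁ ds₂ : List Bool} {x y : ℕ}

lemma PathAdj.le_length (h : PathAdj ds x y) : x ≤ ds.length ∧ y ≤ ds.length := by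
  rcases h with ⟨hx, rfl⟩ | ⟨hy, rfl⟩
  · have := (List.getElem?_eq_some_iff.mp hx).1; omega
  · have := (List.getElem?_eq_some_iff.mp hy).1; omega

lemma PathAdj.pathHeight_eq (h : PathAdj ds x y) : pathHeight ds y = pathHeight ds x + 1 := by
  rcases h with ⟨hx, rfl⟩ | ⟨hy, rfl⟩ <;>
    simp [pathHeight, List.take_add_one, *]

lemma pathHeight_zero (ds : List Bool) : pathHeight ds 0 = 0 := by
  simp [pathHeight]

lemma pathHeight_cons_succ (b : Bool) (ds : List Bool) (j : ℕ) :
    pathHeight (b :: ds) (j + 1) = (if b then 1 else -1) + pathHeight ds j := by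
  simp [pathHeight]

lemma pathHeight_append (ds₁ ds₂ : List Bool) (j : ℕ) :
    pathHeight (ds₁ ++ ds₂) j = pathHeight ds₁ j + pathHeight ds₂ (j - ds₁.length) := by
  simp [pathHeight, List.take_append]

lemma PathAdj.append_right (h : PathAdj ds₁ x y) : PathAdj (ds₁ ++ ds₂) x y := by
  rcases h with ⟨hx, rfl⟩ | ⟨hy, rfl⟩
  · rw [← List.getElem?_append_left (l₂ := ds₂) (List.getElem?_eq_some_iff.mp hx).1] at hx
    exact Or.inl ⟨hx, rfl⟩
  · rw [← List.getElem?_append_left (l₂ := ds₂) (List.getElem?_eq_some_iff.mp hy).1] at hy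
    exact Or.inr ⟨hy, rfl⟩

lemma PathAdj.append_left (h : PathAdj ds₂ x y) :
    PathAdj (ds₁ ++ ds₂) (x + ds₁.length) (y + ds₁.length) := by
  rcases h with ⟨hx, rfl⟩ | ⟨hy, rfl⟩
  · exact Or.inl ⟨by rw [List.getElem?_append_right (by omega)]; simpa using hx, by omega⟩
  · exact Or.inr ⟨by rw [List.getElem?_append_right (by omega)]; simpa using hy, by omega⟩

lemma PathAdj.of_append (h : PathAdj (ds₁ ++ ds₂) x y) :
    (x ≤ ds₁.length ∧ y ≤ ds₁.length ∧ PathAdj ds₁ x y) ∨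
      (ds₁.length ≤ x ∧ ds₁.length ≤ y ∧
        PathAdj ds₂ (x - ds₁.length) (y - ds₁.length)) := by
  rcases h with ⟨hx, rfl⟩ | ⟨hy, rfl⟩
  · by_cases hlt : x < ds₁.length
    · rw [List.getElem?_append_left hlt] at hx
      exact Or.inl ⟨by omega, by omega, Or.inl ⟨hx, rfl⟩⟩
    · rw [List.getElem?_append_right (by omega)] at hx
      exact Or.inr ⟨by omega, by omega, Or.inl ⟨hx, by omega⟩⟩
  · by_cases hlt : y < ds₁.length
    · rw [List.getElem?_append_left hlt] at hy
      exact Or.inl ⟨by omega, by omega, Or.inr ⟨hy, rfl⟩⟩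
    · rw [List.getElem?_append_right (by omega)] at hy
      exact Or.inr ⟨by omega, by omega, Or.inr ⟨hy, by omega⟩⟩

def PathHomTo (ds ds' : List Bool) : Prop :=
  ∃ p : ℕ → ℕ, IsDigraphHom (PathAdj ds) (PathAdj ds') p ∧ p 0 = 0 ∧ p ds.length = ds'.length

lemma PathHomTo.refl (ds : List Bool) : PathHomTo ds ds :=
  ⟨id, fun _ _ h => h, rfl, rfl⟩

lemma PathHomTo.append {ds₁' ds₂' : List Bool} (h₁ : PathHomTo ds₁ ds₁')
    (h₂ : PathHomTo ds₂ ds₂') : PathHomTo (ds₁ ++ ds₂) (ds₁' ++ ds₂') := by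
  obtain ⟨p₁, hp₁, h₁0, h₁l⟩ := h₁
  obtain ⟨p₂, hp₂, h₂0, h₂l⟩ := h₂
  let p : ℕ → ℕ := fun x =>
    if x ≤ ds₁.length then p₁ x else p₂ (x - ds₁.length) + ds₁'.length
  have hleft : ∀ x ≤ ds₁.length, p x = p₁ x := fun x hx => if_pos hx
  have hright : ∀ x, ds₁.length ≤ x → p x = p₂ (x - ds₁.length) + ds₁'.length := by
    intro x hx
    by_cases hx' : x ≤ ds₁.length
    · rw [hleft x hx', show x = ds₁.length by omega, h₁l, Nat.sub_self, h₂0, zero_add]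
    · exact if_neg hx'
  refine ⟨p, fun x y hxy => ?_, hleft 0 (Nat.zero_le _) ▸ h₁0, ?_⟩
  · rcases hxy.of_append with ⟨hx, hy, hxy⟩ | ⟨hx, hy, hxy⟩
    · rw [hleft x hx, hleft y hy]
      exact (hp₁ x y hxy).append_right
    · rw [hright x hx, hright y hy]
      exact (hp₂ _ _ hxy).append_left
  · rw [List.length_append, hright _ (by omega), Nat.add_sub_cancel_left, h₂l,
      List.length_append, add_comm]

lemma pathAdj_succ_or (hx : x < ds.length) : PathAdj ds x (x + 1) ∨ PathAdj ds (x + 1) x := by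
  rcases hb : ds[x] with _ | _
  · exact Or.inr (Or.inr ⟨by rw [List.getElem?_eq_getElem hx, hb], rfl⟩)
  · exact Or.inl (Or.inl ⟨by rw [List.getElem?_eq_getElem hx, hb], rfl⟩)

def blockDirs (b : Bool) : List Bool := if b then [true] else [true, false, true]

def blocksDirs (L : List Bool) : List Bool := L.flatMap blockDirs ++ [true]

lemma blocksDirs_cons (b : Bool) (L : List Bool) :
    blocksDirs (b :: L) = blockDirs b ++ blocksDirs L := by
  simp [blocksDirs]

lemma exists_blocksDirs_eq_true_cons (L : List Bool) : ∃ r, blocksDirs L = true :: r := by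
  rcases L with _ | ⟨_ | _, L⟩ <;> simp [blocksDirs, blockDirs]

lemma length_blocksDirs_ge (L : List Bool) : L.length + 1 ≤ (blocksDirs L).length := by
  induction L with
  | nil => simp [blocksDirs]
  | cons b L ih => cases b <;> simp [blocksDirs_cons, blockDirs] at ih ⊢ <;> omega

lemma pathHeight_blockDirs (b : Bool) (j : ℕ) :
    0 ≤ pathHeight (blockDirs b) j ∧ pathHeight (blockDirs b) j ≤ 1 ∧
      ((blockDirs b).length ≤ j → pathHeight (blockDirs b) j = 1) := by
  cases b <;> rcases j with _ | _ | _ | _ | j <;> simp [blockDirs, pathHeight]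

lemma pathHeight_blocksDirs (L : List Bool) :
    (∀ j < (blocksDirs L).length,
      0 ≤ pathHeight (blocksDirs L) j ∧ pathHeight (blocksDirs L) j ≤ L.length) ∧
    pathHeight (blocksDirs L) (blocksDirs L).length = L.length + 1 := by
  induction L with
  | nil => refine ⟨fun j hj => ?_, ?_⟩ <;> simp_all [blocksDirs, pathHeight]
  | cons b L ih =>
    have hB := pathHeight_blockDirs b
    simp only [blocksDirs_cons, pathHeight_append, List.length_append, List.length_cons]
    refine ⟨fun j hj => ?_, ?_⟩
    · by_cases hjb : j < (blockDirs b).length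
      · rw [Nat.sub_eq_zero_of_le hjb.le, pathHeight_zero]
        push_cast
        constructor <;> linarith [(hB j).1, (hB j).2.1]
      · have := ih.1 (j - (blockDirs b).length) (by omega)
        rw [(hB j).2.2 (by omega)]
        constructor <;> push_cast <;> linarith
    · rw [(hB _).2.2 (by omega), Nat.add_sub_cancel_left, ih.2]
      push_cast; ring

lemma pathHomTo_blockDirs {b b' : Bool} (h : b ≤ b') :
    PathHomTo (blockDirs b) (blockDirs b') := by
  rcases b with _ | _ <;> rcases b' with _ | _
  · exact .refl _
  · -- fold the zigzag onto the edge
    refine ⟨(· % 2), fun x y hxy => ?_, rfl, rfl⟩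
    obtain ⟨hx, hy⟩ := hxy.le_length
    simp only [blockDirs, Bool.false_eq_true, if_false, List.length_cons,
      List.length_nil] at hx hy hxy
    rcases hxy with ⟨hx, rfl⟩ | ⟨hy, rfl⟩
    · interval_cases x <;> simp_all [PathAdj, blockDirs]
    · interval_cases y <;> simp_all [PathAdj, blockDirs]
  · exact absurd h (by decide)
  · exact .refl _

lemma pathHomTo_blocksDirs {L L' : List Bool} (h : List.Forall₂ (· ≤ ·) L L') :
    PathHomTo (blocksDirs L) (blocksDirs L') := by
  induction h with
  | nil => exact .refl _
  | cons hb _ ih =>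
    rw [blocksDirs_cons, blocksDirs_cons]
    exact (pathHomTo_blockDirs hb).append ih

def OutEdgesToSucc (ds : List Bool) (q : ℕ) : Prop := ∀ k, PathAdj ds q k → k = q + 1

lemma outEdgesToSucc_zero (ds : List Bool) : OutEdgesToSucc ds 0 := by
  rintro k (⟨-, rfl⟩ | ⟨-, h⟩)
  · rfl
  · omega

lemma outEdgesToSucc_succ {m : ℕ} (h : ds[m]? = some true) : OutEdgesToSucc ds (m + 1) := by
  rintro k (⟨-, rfl⟩ | ⟨hk, hkm⟩)
  · rfl
  · obtain rfl : k = m := by omega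
    simp [h] at hk

lemma OutEdgesToSucc.eq {q k : ℕ} (hq : OutEdgesToSucc ds q) (h : PathAdj ds q k) :
    k = q + 1 ∧ ds[q]? = some true := by
  obtain rfl := hq k h
  rcases h with ⟨h, -⟩ | ⟨-, h⟩
  · exact ⟨rfl, h⟩
  · omega

lemma not_pathAdj_of_peak {m k : ℕ} (h₁ : ds[m]? = some true) (h₂ : ds[m + 1]? = some false) :
    ¬ PathAdj ds (m + 1) k := by
  rintro (⟨h, -⟩ | ⟨h, hk⟩)
  · simp [h₂] at h
  · obtain rfl : k = m := by omega
    simp [h₁] at h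

section Rigidity

variable {ds ds' : List Bool} {p : ℕ → ℕ}

lemma IsDigraphHom.blockDirs_step (hp : IsDigraphHom (PathAdj ds) (PathAdj ds') p)
    {a a' : ℕ} {b b' : Bool} {r r' : List Bool}
    (hd : ds.drop a = blockDirs b ++ true :: r) (hd' : ds'.drop a' = blockDirs b' ++ true :: r')
    (hout : OutEdgesToSucc ds' a') (hpa : p a = a') :
    b ≤ b' ∧ p (a + (blockDirs b).length) = a' + (blockDirs b').length ∧
      OutEdgesToSucc ds' (a' + (blockDirs b').length) ∧
      (b = b' → ∀ j ≤ (blockDirs b).length, p (a + j) = a' + j) := by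
  have hg : ∀ k, ds[a + k]? = (blockDirs b ++ true :: r)[k]? := fun k => by
    rw [← List.getElem?_drop, hd]
  have hg' : ∀ k, ds'[a' + k]? = (blockDirs b' ++ true :: r')[k]? := fun k => by
    rw [← List.getElem?_drop, hd']
  have up : ∀ k, ds[k]? = some true → PathAdj ds' (p k) (p (k + 1)) := fun k hk =>
    hp _ _ (Or.inl ⟨hk, rfl⟩)
  have down : ∀ k, ds[k]? = some false → PathAdj ds' (p (k + 1)) (p k) := fun k hk =>
    hp _ _ (Or.inr ⟨hk, rfl⟩)
  rcases b with _ | _ <;> rcases b' with _ | _ <;>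
    simp only [blockDirs, Bool.false_eq_true, if_false, if_true, List.cons_append,
      List.nil_append] at hg hg' <;>
    simp only [blockDirs, Bool.false_eq_true, if_false, if_true, List.length_cons,
      List.length_nil, zero_add, Nat.reduceAdd]
  all_goals have h1 : p (a + 1) = a' + 1 := (hout.eq (hpa ▸ up a (by simpa using hg 0))).1
  · -- zigzag onto zigzag: a walk folding back at the peak `a' + 1` could not go on upwards
    have peak : ∀ k, ds[k]? = some true → p k ≠ a' + 1 := fun k hk hpk =>
      not_pathAdj_of_peak (by simpa using hg' 0) (by simpa using hg' 1) (hpk ▸ up k hk)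
    have h2 : p (a + 2) = a' + 2 := by
      have e : PathAdj ds' (p (a + 2)) (a' + 1) := h1 ▸ down (a + 1) (by simpa using hg 1)
      rcases e with ⟨-, h⟩ | ⟨-, h⟩
      · have h3 := (hout.eq ((by omega : p (a + 2) = a') ▸ up (a + 2) (by simpa using hg 2))).1
        exact absurd h3 (peak (a + 3) (by simpa using hg 3))
      · exact h
    have h3 : p (a + 3) = a' + 3 := by
      have e : PathAdj ds' (a' + 2) (p (a + 3)) := h2 ▸ up (a + 2) (by simpa using hg 2)
      rcases e with ⟨-, h⟩ | ⟨-, h⟩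
      · exact h
      · exact absurd (by omega) (peak (a + 3) (by simpa using hg 3))
    refine ⟨le_rfl, h3, outEdgesToSucc_succ (m := a' + 2) (by simpa using hg' 2),
      fun _ j hj => ?_⟩
    interval_cases j <;> assumption
  · have h2 : p (a + 2) = a' := by
      have e : PathAdj ds' (p (a + 2)) (a' + 1) := h1 ▸ down (a + 1) (by simpa using hg 1)
      rcases e with ⟨-, h⟩ | ⟨h, -⟩
      · omega
      · simp [hg' 1] at h
    exact ⟨by decide, (hout.eq (h2 ▸ up (a + 2) (by simpa using hg 2))).1,
      outEdgesToSucc_succ (by simpa using hg' 0), by simp⟩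
  · exact (not_pathAdj_of_peak (by simpa using hg' 0) (by simpa using hg' 1)
      (h1 ▸ up (a + 1) (by simpa using hg 1))).elim
  · refine ⟨le_rfl, h1, outEdgesToSucc_succ (by simpa using hg' 0), fun _ j hj => ?_⟩
    interval_cases j <;> assumption

lemma IsDigraphHom.blocksDirs_rigid (hp : IsDigraphHom (PathAdj ds) (PathAdj ds') p)
    {L L' : List Bool} (hlen : L.length = L'.length) {a a' : ℕ} (hd : ds.drop a = blocksDirs L)
    (hd' : ds'.drop a' = blocksDirs L') (hout : OutEdgesToSucc ds' a') (hpa : p a = a') :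
    List.Forall₂ (· ≤ ·) L L' ∧
      (L = L' → ∀ j ≤ (blocksDirs L).length, p (a + j) = a' + j) := by
  induction L generalizing L' a a' with
  | nil =>
    obtain rfl := List.length_eq_zero_iff.mp hlen.symm
    refine ⟨.nil, fun _ j hj => ?_⟩
    have ha : ds[a]? = some true := by rw [← add_zero a, ← List.getElem?_drop, hd]; rfl
    rcases (by simp [blocksDirs] at hj; omega : j = 0 ∨ j = 1) with rfl | rfl
    · exact hpa
    · exact (hout.eq (hpa ▸ hp _ _ (Or.inl ⟨ha, rfl⟩))).1
  | cons b L ih =>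
    obtain ⟨b', L', rfl⟩ := List.exists_cons_of_length_eq_add_one hlen.symm
    obtain ⟨r, hr⟩ := exists_blocksDirs_eq_true_cons L
    obtain ⟨r', hr'⟩ := exists_blocksDirs_eq_true_cons L'
    rw [blocksDirs_cons] at hd hd' ⊢
    obtain ⟨hbb, hpa₂, hout₂, hid⟩ := hp.blockDirs_step (hr ▸ hd) (hr' ▸ hd') hout hpa
    have hd₂ : ds.drop (a + (blockDirs b).length) = blocksDirs L := by
      rw [← List.drop_drop, hd, List.drop_left]
    have hd₂' : ds'.drop (a' + (blockDirs b').length) = blocksDirs L' := by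
      rw [← List.drop_drop, hd', List.drop_left]
    obtain ⟨hLL, hid₂⟩ := ih (by simpa using hlen) hd₂ hd₂' hout₂ hpa₂
    refine ⟨.cons hbb hLL, fun heq j hj => ?_⟩
    obtain ⟨rfl, rfl⟩ := List.cons_eq_cons.mp heq
    by_cases hjb : j ≤ (blockDirs b).length
    · exact hid rfl j hjb
    · have := hid₂ rfl (j - (blockDirs b).length) (by simp at hj; omega)
      rwa [add_assoc, add_assoc, Nat.add_sub_cancel' (by omega)] at this

end Rigidity

end OrientedPath

/-- The initial edge of `Q_S` counts as one more single-edge block. -/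
def qBlocks {n : ℕ} (S : Finset (Fin n)) : List Bool :=
  true :: (List.finRange n).map (· ∈ S)

lemma QDirs_eq_blocksDirs (n : ℕ) (S : Finset (Fin n)) : QDirs n S = blocksDirs (qBlocks S) := by
  simp [QDirs, qBlocks, blocksDirs, blockDirs, List.flatMap_map]

lemma forall₂_qBlocks_iff {n : ℕ} {S S' : Finset (Fin n)} :
    List.Forall₂ (· ≤ ·) (qBlocks S) (qBlocks S') ↔ S ⊆ S' := by
  simp [qBlocks, List.forall₂_map_left_iff, List.forall₂_map_right_iff, List.forall₂_same,
    Bool.le_iff_imp, Finset.subset_iff]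

section QPath

variable {n : ℕ} {S S' : Finset (Fin n)}

lemma QDirs_eq_true_cons (n : ℕ) (S : Finset (Fin n)) :
    QDirs n S = true :: blocksDirs ((List.finRange n).map (· ∈ S)) := by
  simp [QDirs, blocksDirs, blockDirs, List.flatMap_map]

lemma length_QDirs_ge (n : ℕ) (S : Finset (Fin n)) : n + 2 ≤ (QDirs n S).length := by
  have := length_blocksDirs_ge (qBlocks S)
  rw [QDirs_eq_blocksDirs]
  simp [qBlocks] at this ⊢
  omega

lemma pathHeight_QDirs_length (n : ℕ) (S : Finset (Fin n)) :
    pathHeight (QDirs n S) (QDirs n S).length = n + 2 := by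
  rw [QDirs_eq_true_cons, List.length_cons, pathHeight_cons_succ, (pathHeight_blocksDirs _).2]
  simp; ring

lemma pathHeight_QDirs_of_pos_of_lt {j : ℕ} (h0 : 0 < j) (hj : j < (QDirs n S).length) :
    1 ≤ pathHeight (QDirs n S) j ∧ pathHeight (QDirs n S) j ≤ n + 1 := by
  obtain ⟨j, rfl⟩ : ∃ k, j = k + 1 := ⟨j - 1, by omega⟩
  rw [QDirs_eq_true_cons] at hj ⊢
  rw [pathHeight_cons_succ]
  have := (pathHeight_blocksDirs ((List.finRange n).map (· ∈ S))).1 j (by simpa using hj)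
  simp only [List.length_map, List.length_finRange, if_true] at this ⊢
  constructor <;> linarith

theorem IsDigraphHom.QDirs_rigid {p : ℕ → ℕ}
    (hp : IsDigraphHom (PathAdj (QDirs n S)) (PathAdj (QDirs n S')) p) (h0 : p 0 = 0) :
    S ⊆ S' ∧ (S = S' → ∀ j ≤ (QDirs n S).length, p j = j) := by
  simp only [QDirs_eq_blocksDirs] at hp ⊢
  obtain ⟨hSS, hid⟩ := hp.blocksDirs_rigid (by simp [qBlocks]) List.drop_zero List.drop_zero
    (outEdgesToSucc_zero _) h0
  exact ⟨forall₂_qBlocks_iff.mp hSS, fun h j hj => by simpa using hid (h ▸ rfl) j hj⟩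

theorem pathHomTo_QDirs (h : S ⊆ S') : PathHomTo (QDirs n S) (QDirs n S') := by
  simp only [QDirs_eq_blocksDirs]
  exact pathHomTo_blocksDirs (forall₂_qBlocks_iff.mpr h)

end QPath

section Construction

variable {D : Type} [DecidableEq D] {n : ℕ} {R : Set (Fin n → D)}
  {d d' : D} {t t' : Fin n → D} {ht : t ∈ R} {ht' : t' ∈ R} {x y : ℕ}

lemma length_pathDirs_ge (d : D) (t : Fin n → D) : n + 2 ≤ (pathDirs d t).length :=
  length_QDirs_ge n _

lemma pathVert_zero (d : D) (t : Fin n → D) (ht : t ∈ R) : pathVert d t ht 0 = Sum.inl d := by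
  unfold pathVert; exact dif_pos rfl

lemma pathVert_of_length_le (hx : (pathDirs d t).length ≤ x) :
    pathVert d t ht x = Sum.inr (Sum.inl ⟨t, ht⟩) := by
  have := length_pathDirs_ge d t
  unfold pathVert; exact (dif_neg (by omega)).trans (dif_pos hx)

lemma pathVert_of_pos_of_lt (h0 : 0 < x) (hx : x < (pathDirs d t).length) :
    pathVert d t ht x = Sum.inr (Sum.inr ⟨d, t, ht, x, h0, hx⟩) := by
  unfold pathVert; exact (dif_neg (by omega)).trans (dif_neg (by omega))

lemma pathVert_self (v : InnerVert D n R) : pathVert v.d v.r v.hr v.j = Sum.inr (Sum.inr v) :=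
  pathVert_of_pos_of_lt v.hj0 v.hjlen

lemma pathVert_cases (d : D) (t : Fin n → D) (ht : t ∈ R) (x : ℕ) :
    (x = 0 ∧ pathVert d t ht x = Sum.inl d) ∨
      ((pathDirs d t).length ≤ x ∧ pathVert d t ht x = Sum.inr (Sum.inl ⟨t, ht⟩)) ∨
      ∃ (h0 : 0 < x) (hx : x < (pathDirs d t).length),
        pathVert d t ht x = Sum.inr (Sum.inr ⟨d, t, ht, x, h0, hx⟩) := by
  rcases Nat.eq_zero_or_pos x with rfl | h0
  · exact Or.inl ⟨rfl, pathVert_zero d t ht⟩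
  rcases le_or_gt (pathDirs d t).length x with hx | hx
  · exact Or.inr (Or.inl ⟨hx, pathVert_of_length_le hx⟩)
  · exact Or.inr (Or.inr ⟨h0, hx, pathVert_of_pos_of_lt h0 hx⟩)

lemma pathVert_eq_inl {e : D} (h : pathVert d t ht x = Sum.inl e) : x = 0 ∧ d = e := by
  rcases pathVert_cases d t ht x with ⟨hx, h'⟩ | ⟨-, h'⟩ | ⟨_, _, h'⟩ <;>
    rw [h'] at h <;> cases h
  exact ⟨hx, rfl⟩

lemma pathVert_eq_top {s : {t : Fin n → D // t ∈ R}}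
    (h : pathVert d t ht x = Sum.inr (Sum.inl s)) : (pathDirs d t).length ≤ x ∧ s = ⟨t, ht⟩ := by
  rcases pathVert_cases d t ht x with ⟨-, h'⟩ | ⟨hx, h'⟩ | ⟨_, _, h'⟩ <;>
    rw [h'] at h <;> cases h
  exact ⟨hx, rfl⟩

lemma pathVert_inner_inj (h0 : 0 < x) (hx : x < (pathDirs d t).length)
    (h : pathVert d t ht x = pathVert d' t' ht' y) : d' = d ∧ t' = t ∧ y = x := by
  rw [pathVert_of_pos_of_lt h0 hx] at h
  rcases pathVert_cases d' t' ht' y with ⟨-, h'⟩ | ⟨-, h'⟩ | ⟨_, _, h'⟩ <;>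
    rw [h'] at h <;> cases h
  exact ⟨rfl, rfl, rfl⟩

lemma pathVert_inj (hx : x ≤ (pathDirs d t).length) (hy : y ≤ (pathDirs d t).length)
    (h : pathVert d t ht x = pathVert d t ht y) : x = y := by
  rcases Nat.eq_zero_or_pos x with rfl | h0
  · exact ((pathVert_eq_inl (h.symm.trans (pathVert_zero d t ht))).1).symm
  rcases hx.lt_or_eq with hx | rfl
  · exact ((pathVert_inner_inj h0 hx h).2.2).symm
  · exact le_antisymm ((pathVert_eq_top (h.symm.trans (pathVert_of_length_le le_rfl))).1) hy

lemma DEdge_iff {a b : DVert D n R} :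
    DEdge a b ↔ ∃ (d : D) (t : Fin n → D) (ht : t ∈ R) (x y : ℕ),
      PathAdj (pathDirs d t) x y ∧ a = pathVert d t ht x ∧ b = pathVert d t ht y := by
  constructor
  · rintro ⟨d, t, ht, i, hi, h⟩
    have hget : (pathDirs d t)[i]? = some ((pathDirs d t).get ⟨i, hi⟩) :=
      List.getElem?_eq_getElem hi
    split_ifs at h with hb
    · exact ⟨d, t, ht, i, i + 1, Or.inl ⟨hb ▸ hget, rfl⟩, h⟩
    · exact ⟨d, t, ht, i + 1, i, Or.inr ⟨by rw [hget, Bool.eq_false_iff.mpr hb], rfl⟩, h⟩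
  · rintro ⟨d, t, ht, x, y, ⟨hx, rfl⟩ | ⟨hy, rfl⟩, rfl, rfl⟩
    · obtain ⟨hlt, hb⟩ := List.getElem?_eq_some_iff.mp hx
      refine ⟨d, t, ht, x, hlt, ?_⟩
      rw [if_pos (show (pathDirs d t).get ⟨x, hlt⟩ = true from hb)]
      exact ⟨rfl, rfl⟩
    · obtain ⟨hlt, hb⟩ := List.getElem?_eq_some_iff.mp hy
      refine ⟨d, t, ht, y, hlt, ?_⟩
      rw [if_neg (show ¬(pathDirs d t).get ⟨y, hlt⟩ = true by simp [hb])]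
      exact ⟨rfl, rfl⟩

lemma PathAdj.DEdge (ht : t ∈ R) (h : PathAdj (pathDirs d t) x y) :
    DEdge (pathVert d t ht x) (pathVert d t ht y) :=
  DEdge_iff.mpr ⟨d, t, ht, x, y, h, rfl, rfl⟩

lemma DEdge.exists_pathAdj_of_inner {a b : DVert D n R} (hab : DEdge a b) (h0 : 0 < x)
    (hx : x < (pathDirs d t).length) (hmem : a = pathVert d t ht x ∨ b = pathVert d t ht x) :
    ∃ u v, PathAdj (pathDirs d t) u v ∧ a = pathVert d t ht u ∧ b = pathVert d t ht v := by
  obtain ⟨d₁, t₁, ht₁, u, v, huv, rfl, rfl⟩ := DEdge_iff.mp hab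
  rcases hmem with h | h <;> obtain ⟨rfl, rfl, -⟩ := pathVert_inner_inj h0 hx h.symm <;>
    exact ⟨u, v, huv, rfl, rfl⟩

lemma DEdge.pathAdj_of_pathVert (h : DEdge (pathVert d t ht x) (pathVert d t ht y))
    (hx : x ≤ (pathDirs d t).length) (hy : y ≤ (pathDirs d t).length)
    (hinner : (0 < x ∧ x < (pathDirs d t).length) ∨ (0 < y ∧ y < (pathDirs d t).length)) :
    PathAdj (pathDirs d t) x y := by
  obtain ⟨u, v, huv, hu, hv⟩ : ∃ u v, PathAdj (pathDirs d t) u v ∧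
      pathVert d t ht x = pathVert d t ht u ∧ pathVert d t ht y = pathVert d t ht v := by
    rcases hinner with ⟨h0, hlt⟩ | ⟨h0, hlt⟩
    · exact h.exists_pathAdj_of_inner h0 hlt (Or.inl rfl)
    · exact h.exists_pathAdj_of_inner h0 hlt (Or.inr rfl)
  rwa [pathVert_inj hx huv.le_length.1 hu, pathVert_inj hy huv.le_length.2 hv]

def vertLevel : DVert D n R → ℤ
  | Sum.inl _ => 0
  | Sum.inr (Sum.inl _) => n + 2
  | Sum.inr (Sum.inr v) => pathHeight (pathDirs v.d v.r) v.j

lemma vertLevel_pathVert (hx : x ≤ (pathDirs d t).length) :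
    vertLevel (pathVert d t ht x) = pathHeight (pathDirs d t) x := by
  rcases pathVert_cases d t ht x with ⟨rfl, h⟩ | ⟨hl, h⟩ | ⟨_, _, h⟩ <;> rw [h]
  · exact (pathHeight_zero _).symm
  · rw [le_antisymm hx hl]
    exact (pathHeight_QDirs_length n _).symm
  · rfl

lemma DEdge.vertLevel_eq {a b : DVert D n R} (h : DEdge a b) : vertLevel b = vertLevel a + 1 := by
  obtain ⟨d, t, ht, x, y, hxy, rfl, rfl⟩ := DEdge_iff.mp h
  rw [vertLevel_pathVert hxy.le_length.1, vertLevel_pathVert hxy.le_length.2]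
  exact hxy.pathHeight_eq

lemma vertLevel_inner (v : InnerVert D n R) :
    1 ≤ vertLevel (Sum.inr (Sum.inr v) : DVert D n R) ∧
      vertLevel (Sum.inr (Sum.inr v) : DVert D n R) ≤ n + 1 :=
  pathHeight_QDirs_of_pos_of_lt v.hj0 v.hjlen

lemma vertLevel_nonneg (v : DVert D n R) : 0 ≤ vertLevel v := by
  rcases v with _ | _ | v
  · exact le_rfl
  · simp [vertLevel]; positivity
  · linarith [vertLevel_inner v]

lemma vertLevel_le (v : DVert D n R) : vertLevel v ≤ n + 2 := by
  rcases v with _ | _ | v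
  · simp [vertLevel]; positivity
  · exact le_rfl
  · linarith [vertLevel_inner v]

lemma exists_inl_of_vertLevel_eq_zero {v : DVert D n R} (h : vertLevel v = 0) :
    ∃ e, v = Sum.inl e := by
  rcases v with e | _ | v
  · exact ⟨e, rfl⟩
  · simp [vertLevel] at h; omega
  · linarith [vertLevel_inner v]

lemma exists_top_of_vertLevel_eq {v : DVert D n R} (h : vertLevel v = n + 2) :
    ∃ s, v = Sum.inr (Sum.inl s) := by
  rcases v with _ | s | v
  · simp [vertLevel] at h; omega
  · exact ⟨s, rfl⟩
  · linarith [vertLevel_inner v]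

lemma exists_pathVert_of_vertLevel {v : DVert D n R} (h0 : vertLevel v ≠ 0)
    (h1 : vertLevel v ≠ n + 2) :
    ∃ (d : D) (t : Fin n → D) (ht : t ∈ R) (x : ℕ),
      0 < x ∧ x < (pathDirs d t).length ∧ v = pathVert d t ht x := by
  rcases v with _ | _ | v
  · exact absurd rfl h0
  · exact absurd rfl h1
  · exact ⟨v.d, v.r, v.hr, v.j, v.hj0, v.hjlen, (pathVert_self v).symm⟩

lemma pos_lt_of_vertLevel_pathVert (hx : x ≤ (pathDirs d t).length)
    (h0 : vertLevel (pathVert d t ht x) ≠ 0) (h1 : vertLevel (pathVert d t ht x) ≠ n + 2) :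
    0 < x ∧ x < (pathDirs d t).length := by
  rw [vertLevel_pathVert hx] at h0 h1
  exact ⟨Nat.pos_of_ne_zero fun h => h0 (h ▸ pathHeight_zero _),
    lt_of_le_of_ne hx fun h => h1 (h ▸ pathHeight_QDirs_length n _)⟩

lemma weakReach_pathVert (ht : t ∈ R) (hx : x ≤ (pathDirs d t).length) :
    WeakReach DEdge (pathVert d t ht x) (Sum.inl d) := by
  induction x with
  | zero => rw [pathVert_zero]; exact .refl
  | succ x ih =>
    refine .head ?_ (ih (Nat.le_of_succ_le hx))
    exact ((pathAdj_succ_or hx).imp (PathAdj.DEdge ht) (PathAdj.DEdge ht)).symm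

lemma weakReach_inl {t₀ : Fin n → D} (ht₀ : t₀ ∈ R) (e : D) (v : DVert D n R) :
    WeakReach DEdge v (Sum.inl e) := by
  have top : ∀ d t (ht : t ∈ R), WeakReach DEdge (Sum.inr (Sum.inl ⟨t, ht⟩)) (Sum.inl d) :=
    fun d t ht => pathVert_of_length_le (d := d) le_rfl ▸ weakReach_pathVert ht le_rfl
  rcases v with d | ⟨t, ht⟩ | v
  · exact (top d t₀ ht₀).symm.trans (top e t₀ ht₀)
  · exact top e t ht
  · exact pathVert_self v ▸ (weakReach_pathVert v.hr v.hjlen.le).trans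
      ((top v.d t₀ ht₀).symm.trans (top e t₀ ht₀))

lemma exists_pathVert_of_adj_inner {a b : DVert D n R} (hab : DEdge a b ∨ DEdge b a)
    (h0 : 0 < y) (hy : y < (pathDirs d t).length) (ha : a = pathVert d t ht y) :
    ∃ z ≤ (pathDirs d t).length, b = pathVert d t ht z := by
  rcases hab with hab | hab
  · obtain ⟨u, v, huv, -, rfl⟩ := hab.exists_pathAdj_of_inner h0 hy (Or.inl ha)
    exact ⟨v, huv.le_length.2, rfl⟩
  · obtain ⟨u, v, huv, rfl, -⟩ := hab.exists_pathAdj_of_inner h0 hy (Or.inr ha)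
    exact ⟨u, huv.le_length.1, rfl⟩

end Construction

section Endomorphism

variable {D : Type} [DecidableEq D] {n : ℕ} {R : Set (Fin n → D)} {h : DVert D n R → DVert D n R}

lemma IsDigraphHom.vertLevel_eq (hh : IsDigraphHom DEdge DEdge h) (hn : 1 ≤ n) (hR : R.Nonempty)
    (v : DVert D n R) : vertLevel (h v) = vertLevel v := by
  obtain ⟨t₀, ht₀⟩ := hR
  have shift : ∀ v, vertLevel (h v) - vertLevel v =
      vertLevel (h (Sum.inl (t₀ ⟨0, hn⟩))) - 0 :=
    fun v => (weakReach_inl ht₀ _ v).grade_sub_eq vertLevel vertLevel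
      (fun _ _ => DEdge.vertLevel_eq) (fun _ _ => DEdge.vertLevel_eq) hh
  -- the constant shift is `≥ 0` at a base vertex and `≤ 0` at a top vertex
  have htop : vertLevel (h (Sum.inr (Sum.inl ⟨t₀, ht₀⟩))) - (n + 2) =
      vertLevel (h (Sum.inl (t₀ ⟨0, hn⟩))) - 0 := shift _
  linarith [shift v, vertLevel_le (h (Sum.inr (Sum.inl ⟨t₀, ht₀⟩))),
    vertLevel_nonneg (h (Sum.inl (t₀ ⟨0, hn⟩)))]

lemma IsDigraphHom.exists_copy_image (hh : IsDigraphHom DEdge DEdge h)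
    (hlev : ∀ v, vertLevel (h v) = vertLevel v)
    {d d' : D} (hd : h (Sum.inl d) = Sum.inl d')
    {t : Fin n → D} (ht : t ∈ R) :
    ∃ (t' : Fin n → D) (ht' : t' ∈ R), ∀ x, 1 ≤ x → x ≤ (pathDirs d t).length →
      ∃ y ≤ (pathDirs d' t').length, h (pathVert d t ht x) = pathVert d' t' ht' y := by
  have inner : ∀ x, 0 < x → x < (pathDirs d t).length →
      vertLevel (h (pathVert d t ht x)) ≠ 0 ∧ vertLevel (h (pathVert d t ht x)) ≠ n + 2 := by
    intro x h0 hx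
    rw [hlev, vertLevel_pathVert hx.le]
    have : 1 ≤ pathHeight (pathDirs d t) x ∧ pathHeight (pathDirs d t) x ≤ n + 1 :=
      pathHeight_QDirs_of_pos_of_lt h0 hx
    constructor <;> linarith
  have hadj : ∀ x < (pathDirs d t).length,
      DEdge (h (pathVert d t ht x)) (h (pathVert d t ht (x + 1))) ∨
        DEdge (h (pathVert d t ht (x + 1))) (h (pathVert d t ht x)) := fun x hx =>
    (pathAdj_succ_or hx).imp (fun e => hh _ _ (e.DEdge ht)) (fun e => hh _ _ (e.DEdge ht))
  have hlen := length_pathDirs_ge d t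
  obtain ⟨d₁, t', ht', x₁, h0₁, hx₁, h1⟩ :=
    exists_pathVert_of_vertLevel (inner 1 one_pos (by omega)).1 (inner 1 one_pos (by omega)).2
  obtain ⟨z, -, hz⟩ := exists_pathVert_of_adj_inner (hadj 0 (by omega)).symm h0₁ hx₁ h1
  rw [pathVert_zero, hd] at hz
  obtain ⟨-, rfl⟩ := pathVert_eq_inl hz.symm
  refine ⟨t', ht', fun x hx1 => ?_⟩
  induction x, hx1 using Nat.le_induction with
  | base => exact fun _ => ⟨x₁, hx₁.le, h1⟩
  | succ x hx1 ih =>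
    intro hx
    obtain ⟨y, hy, hxy⟩ := ih (by omega)
    obtain ⟨h0y, hlty⟩ := pos_lt_of_vertLevel_pathVert hy (hxy ▸ (inner x (by omega) hx).1)
      (hxy ▸ (inner x (by omega) hx).2)
    exact exists_pathVert_of_adj_inner (hadj x hx) h0y hlty hxy

lemma IsDigraphHom.exists_copy_pathHom (hh : IsDigraphHom DEdge DEdge h)
    (hlev : ∀ v, vertLevel (h v) = vertLevel v)
    {d d' : D} (hd : h (Sum.inl d) = Sum.inl d')
    {t : Fin n → D} (ht : t ∈ R) :
    ∃ (t' : Fin n → D) (ht' : t' ∈ R) (p : ℕ → ℕ),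
      IsDigraphHom (PathAdj (pathDirs d t)) (PathAdj (pathDirs d' t')) p ∧ p 0 = 0 ∧
      h (Sum.inr (Sum.inl ⟨t, ht⟩)) = Sum.inr (Sum.inl ⟨t', ht'⟩) ∧
      ∀ x ≤ (pathDirs d t).length, h (pathVert d t ht x) = pathVert d' t' ht' (p x) := by
  obtain ⟨t', ht', walk⟩ := hh.exists_copy_image hlev hd ht
  have hpos : ∀ x, ∃ y, x ≤ (pathDirs d t).length →
      y ≤ (pathDirs d' t').length ∧ h (pathVert d t ht x) = pathVert d' t' ht' y := by
    intro x
    by_cases hx : x ≤ (pathDirs d t).length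
    · rcases Nat.eq_zero_or_pos x with rfl | hx1
      · exact ⟨0, fun _ => ⟨Nat.zero_le _, by rw [pathVert_zero, pathVert_zero, hd]⟩⟩
      · obtain ⟨y, hy, e⟩ := walk x hx1 hx
        exact ⟨y, fun _ => ⟨hy, e⟩⟩
    · exact ⟨0, fun h => absurd h hx⟩
  choose p hp using hpos
  have hp0 : p 0 = 0 :=
    (pathVert_eq_inl ((hp 0 (Nat.zero_le _)).2.symm.trans (by rw [pathVert_zero, hd]))).1
  refine ⟨t', ht', p, fun x y hxy => ?_, hp0, ?_, fun x hx => (hp x hx).2⟩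
  · obtain ⟨hx, hy⟩ := hxy.le_length
    have e := hh _ _ (hxy.DEdge ht)
    rw [(hp x hx).2, (hp y hy).2] at e
    refine e.pathAdj_of_pathVert (hp x hx).1 (hp y hy).1 ?_
    -- an edge joins consecutive levels, so one of its ends is an inner vertex
    have hl := e.vertLevel_eq
    have := vertLevel_le (pathVert d' t' ht' (p y))
    by_cases h0 : vertLevel (pathVert d' t' ht' (p x)) = 0
    · exact Or.inr (pos_lt_of_vertLevel_pathVert (hp y hy).1 (by omega) (by omega))
    · exact Or.inl (pos_lt_of_vertLevel_pathVert (hp x hx).1 h0 (by omega))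
  · obtain ⟨s, hs⟩ := exists_top_of_vertLevel_eq (hlev (Sum.inr (Sum.inl ⟨t, ht⟩)))
    have e : h (Sum.inr (Sum.inl ⟨t, ht⟩)) = pathVert d' t' ht' (p (pathDirs d t).length) :=
      pathVert_of_length_le (d := d) (ht := ht) le_rfl ▸ (hp _ le_rfl).2
    rw [hs] at e ⊢
    rw [(pathVert_eq_top e.symm).2]

lemma IsDigraphHom.image_top (hh : IsDigraphHom DEdge DEdge h)
    (hlev : ∀ v, vertLevel (h v) = vertLevel v)
    {g : D → D} (hg : ∀ e, h (Sum.inl e) = Sum.inl (g e))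
    {t : Fin n → D} (ht : t ∈ R) :
    ∃ ht' : (fun i => g (t i)) ∈ R,
      h (Sum.inr (Sum.inl ⟨t, ht⟩)) = Sum.inr (Sum.inl ⟨fun i => g (t i), ht'⟩) := by
  obtain ⟨⟨s, hs⟩, htop⟩ := exists_top_of_vertLevel_eq (hlev (Sum.inr (Sum.inl ⟨t, ht⟩)))
  -- coordinate `i` is read off the copy of `Q_S` from `t i` to `t`, since there `i ∈ S`
  have hcoord : ∀ i, g (t i) = s i := by
    intro i
    obtain ⟨t', ht', p, hp, hp0, htop', -⟩ := hh.exists_copy_pathHom hlev (hg (t i)) ht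
    obtain rfl : t' = s :=
      congrArg Subtype.val (Sum.inl.inj (Sum.inr.inj (htop'.symm.trans htop)))
    have hi := (hp.QDirs_rigid hp0).1 (Finset.mem_filter.mpr ⟨Finset.mem_univ i, rfl⟩)
    exact (Finset.mem_filter.mp hi).2
  obtain rfl : (fun i => g (t i)) = s := funext hcoord
  exact ⟨hs, htop⟩

lemma IsDigraphHom.eq_id_of_fixes_inl (hh : IsDigraphHom DEdge DEdge h)
    (hlev : ∀ v, vertLevel (h v) = vertLevel v)
    (hfix : ∀ e, h (Sum.inl e) = Sum.inl e) : h = id := by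
  have htop : ∀ s, h (Sum.inr (Sum.inl s)) = Sum.inr (Sum.inl s) := fun ⟨_, ht⟩ =>
    (hh.image_top hlev (g := id) hfix ht).2
  funext v
  rcases v with e | s | v
  · exact hfix e
  · exact htop s
  · obtain ⟨t', ht', p, hp, hp0, htop', hpath⟩ := hh.exists_copy_pathHom hlev (hfix v.d) v.hr
    obtain rfl : t' = v.r :=
      congrArg Subtype.val (Sum.inl.inj (Sum.inr.inj (htop'.symm.trans (htop _))))
    rw [← pathVert_self, hpath v.j v.hjlen.le, (hp.QDirs_rigid hp0).2 rfl v.j v.hjlen.le]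
    rfl

lemma IsDigraphHom.eq_id_of_rigid (hh : IsDigraphHom DEdge DEdge h)
    (hlev : ∀ v, vertLevel (h v) = vertLevel v)
    (hrigid : ∀ g, IsUnaryPolymorphism R g → g = id) : h = id := by
  choose g hg using fun e => exists_inl_of_vertLevel_eq_zero (hlev (Sum.inl e))
  obtain rfl := hrigid g fun t ht => (hh.image_top hlev hg ht).1
  exact hh.eq_id_of_fixes_inl hlev hg

lemma exists_hom_of_isUnaryPolymorphism {g : D → D} (hg : IsUnaryPolymorphism R g) :
    ∃ h : DVert D n R → DVert D n R,
      IsDigraphHom DEdge DEdge h ∧ ∀ e, h (Sum.inl e) = Sum.inl (g e) := by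
  have hS : ∀ (d : D) (t : Fin n → D), PathHomTo (pathDirs d t) (pathDirs (g d) (g ∘ t)) :=
    fun d t => pathHomTo_QDirs fun i hi => by simp_all
  choose ψ hψ hψ0 hψlen using hS
  let h : DVert D n R → DVert D n R := fun v => match v with
    | Sum.inl e => Sum.inl (g e)
    | Sum.inr (Sum.inl s) => Sum.inr (Sum.inl ⟨g ∘ s.1, hg s.1 s.2⟩)
    | Sum.inr (Sum.inr v) => pathVert (g v.d) (g ∘ v.r) (hg v.r v.hr) (ψ v.d v.r v.j)
  have hpath : ∀ d t (ht : t ∈ R), ∀ x ≤ (pathDirs d t).length,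
      h (pathVert d t ht x) = pathVert (g d) (g ∘ t) (hg t ht) (ψ d t x) := by
    intro d t ht x hx
    rcases pathVert_cases d t ht x with ⟨rfl, e⟩ | ⟨hl, e⟩ | ⟨_, _, e⟩ <;> rw [e]
    · rw [hψ0, pathVert_zero]
    · rw [le_antisymm hx hl, hψlen, pathVert_of_length_le le_rfl]
  refine ⟨h, fun a b hab => ?_, fun _ => rfl⟩
  obtain ⟨d, t, ht, x, y, hxy, rfl, rfl⟩ := DEdge_iff.mp hab
  rw [hpath d t ht x hxy.le_length.1, hpath d t ht y hxy.le_length.2]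
  exact (hψ d t _ _ hxy).DEdge _

end Endomorphism

theorem rigid_core_iff_general {D : Type} [DecidableEq D] {n : ℕ} (hn : 1 ≤ n)
    (R : Set (Fin n → D)) (hR : R.Nonempty) :
    (∀ g : D → D, IsUnaryPolymorphism R g → g = id) ↔
      (∀ h : DVert D n R → DVert D n R, IsDigraphHom DEdge DEdge h → h = id) := by
  refine ⟨fun hrigid h hh => hh.eq_id_of_rigid (hh.vertLevel_eq hn hR) hrigid,
    fun hrigid g hg => ?_⟩
  obtain ⟨h, hh, hgh⟩ := exists_hom_of_isUnaryPolymorphism hg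
  funext e
  have he := hgh e
  rw [hrigid h hh] at he
  exact (Sum.inl.inj he).symm

/-- `R` is a rigid core iff the digraph `𝒟(R)` is a rigid core. -/
theorem rigid_core_iff {D : Type} [Fintype D] [DecidableEq D] {n : ℕ} (hn : 1 ≤ n)
    (R : Set (Fin n → D)) (hR : R.Nonempty) :
    (∀ g : D → D, IsUnaryPolymorphism R g → g = id) ↔
      (∀ h : DVert D n R → DVert D n R, IsDigraphHom DEdge DEdge h → h = id) :=
  rigid_core_iff_general hn R hR
end

section
/- Let D be a finite set, R ⊆ D^n a nonempty n-ary relation, and 𝒟 = 𝒟(R) the digraph constructed from R. A vertex v of 𝒟 is the image of the initial vertex of the oriented path Q_∅ under some digraph homomorphism from Q_∅ to 𝒟 if and only if v ∈ D. -/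
open scoped NNRat

/-!
Give every vertex of `𝒟(R)` a level: `0` on `D`, `n + 2` on `R`, and on the inner vertices of
the copy of `Q_S` the net length (forward minus backward edges) of the initial segment leading to
them. Every edge raises the level by exactly one, so a homomorphic image of an oriented path
climbs by the path's net length, which is `n + 2` for every `Q_S`. Since all levels lie in
`[0, n + 2]` and only the vertices of `D` have level `0`, the initial vertex of `Q_∅` must land
in `D`. Conversely, from `d ∈ D` follow the copy of `Q_S` towards any `t ∈ R`, traversing each
single edge of `Q_S` three times where `Q_∅` has a zigzag.
-/

namespace OrientedPath

def netLength (ds : List Bool) : ℤ := (ds.map fun b => if b then 1 else -1).sum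

@[simp] lemma netLength_nil : netLength [] = 0 := rfl

@[simp] lemma netLength_cons (b : Bool) (ds : List Bool) :
    netLength (b :: ds) = (if b then 1 else -1) + netLength ds := by
  simp [netLength]

@[simp] lemma netLength_append (ds es : List Bool) :
    netLength (ds ++ es) = netLength ds + netLength es := by
  simp [netLength]

lemma netLength_take_add_one (ds : List Bool) (i : ℕ) (hi : i < ds.length) :
    netLength (ds.take (i + 1)) = netLength (ds.take i) + if ds.get ⟨i, hi⟩ then 1 else -1 := by
  rw [List.take_add_one, List.getElem?_eq_getElem hi, netLength_append]
  simp [netLength]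

def LevelsBetween (ds : List Bool) (m : ℤ) : Prop :=
  netLength ds = m ∧ ∀ j, 0 ≤ netLength (ds.take j) ∧ netLength (ds.take j) ≤ m

lemma levelsBetween_nil : LevelsBetween [] 0 := ⟨rfl, fun j => by simp⟩

lemma levelsBetween_edge : LevelsBetween [true] 1 :=
  ⟨rfl, fun j => by cases j <;> simp⟩

lemma levelsBetween_zigzag : LevelsBetween [true, false, true] 1 :=
  ⟨rfl, fun j => by rcases j with _ | _ | _ | j <;> simp⟩

lemma LevelsBetween.append {ds es : List Bool} {m k : ℤ} (hd : LevelsBetween ds m)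
    (he : LevelsBetween es k) : LevelsBetween (ds ++ es) (m + k) := by
  refine ⟨by rw [netLength_append, hd.1, he.1], fun j => ?_⟩
  rw [List.take_append, netLength_append]
  have := hd.2 j
  have := he.2 (j - ds.length)
  constructor <;> linarith

lemma LevelsBetween.flatMap {α : Type*} {f : α → List Bool} (hf : ∀ x, LevelsBetween (f x) 1) :
    ∀ l : List α, LevelsBetween (l.flatMap f) l.length
  | [] => levelsBetween_nil
  | x :: l => by
    rw [List.flatMap_cons, List.length_cons, Nat.cast_succ, add_comm]
    exact (hf x).append (LevelsBetween.flatMap hf l)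

lemma levelsBetween_QDirs_tail (n : ℕ) (S : Finset (Fin n)) :
    LevelsBetween (((List.finRange n).flatMap fun l =>
      if l ∈ S then [true] else [true, false, true]) ++ [true]) (n + 1) := by
  have hblocks := LevelsBetween.flatMap
    (f := fun l : Fin n => if l ∈ S then [true] else [true, false, true]) (fun l => by
    split_ifs
    exacts [levelsBetween_edge, levelsBetween_zigzag]) (List.finRange n)
  rw [List.length_finRange] at hblocks
  exact hblocks.append levelsBetween_edge

lemma netLength_QDirs (n : ℕ) (S : Finset (Fin n)) : netLength (QDirs n S) = n + 2 := by
  rw [QDirs, netLength_cons, (levelsBetween_QDirs_tail n S).1]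
  simp only [if_true]
  ring

lemma netLength_take_QDirs_mem {n : ℕ} (S : Finset (Fin n)) {j : ℕ} (hj : 0 < j) :
    netLength ((QDirs n S).take j) ∈ Set.Icc 1 ((n : ℤ) + 2) := by
  obtain ⟨k, rfl⟩ := Nat.exists_eq_add_of_lt hj
  have := (levelsBetween_QDirs_tail n S).2 k
  rw [zero_add, QDirs, List.take_succ_cons, netLength_cons, if_pos rfl]
  constructor <;> linarith

section Walk

variable {V : Type*} (E : V → V → Prop)

def OrientedEdge (b : Bool) (x y : V) : Prop := if b then E x y else E y x

def Walk : List Bool → V → V → Prop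
  | [], u, w => u = w
  | b :: ds, u, w => ∃ x, OrientedEdge E b u x ∧ Walk ds x w

variable {E}

lemma walk_append (ds es : List Bool) (u w : V) :
    Walk E (ds ++ es) u w ↔ ∃ x, Walk E ds u x ∧ Walk E es x w := by
  induction ds generalizing u with
  | nil => simp [Walk]
  | cons b ds ih =>
    simp only [List.cons_append, Walk, ih]
    constructor
    · rintro ⟨y, hy, x, hx, hw⟩
      exact ⟨x, ⟨y, hy, hx⟩, hw⟩
    · rintro ⟨x, ⟨y, hy, hx⟩, hw⟩
      exact ⟨y, hy, x, hx, hw⟩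

lemma walk_zigzag_of_walk_edge {u w : V} (h : Walk E [true] u w) :
    Walk E [true, false, true] u w := by
  obtain ⟨x, hux, rfl⟩ := h
  exact ⟨x, hux, u, hux, x, hux, rfl⟩

lemma walk_flatMap_mono {α : Type*} {f g : α → List Bool}
    (hfg : ∀ a u w, Walk E (f a) u w → Walk E (g a) u w) (l : List α) {u w : V}
    (h : Walk E (l.flatMap f) u w) : Walk E (l.flatMap g) u w := by
  induction l generalizing u with
  | nil => exact h
  | cons a l ih =>
    rw [List.flatMap_cons, walk_append] at h ⊢
    obtain ⟨x, hux, hxw⟩ := h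
    exact ⟨x, hfg a u x hux, ih hxw⟩

lemma walk_QDirs_empty_of_walk_QDirs {n : ℕ} {S : Finset (Fin n)} {u w : V}
    (h : Walk E (QDirs n S) u w) : Walk E (QDirs n ∅) u w := by
  obtain ⟨x, hux, hxw⟩ := h
  rw [walk_append] at hxw
  obtain ⟨y, hxy, hyw⟩ := hxw
  refine ⟨x, hux, (walk_append _ _ _ _).2 ⟨y, walk_flatMap_mono (fun l u w h => ?_) _ hxy, hyw⟩⟩
  rw [if_neg (Finset.notMem_empty l)]
  split_ifs at h
  exacts [walk_zigzag_of_walk_edge h, h]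

lemma walk_iff_exists_fin {ds : List Bool} {u w : V} :
    Walk E ds u w ↔ ∃ h : Fin (ds.length + 1) → V, h 0 = u ∧ h (Fin.last _) = w ∧
      ∀ i, OrientedEdge E (ds.get i) (h i.castSucc) (h i.succ) := by
  induction ds generalizing u with
  | nil =>
    refine ⟨fun huw => ⟨fun _ => u, rfl, huw, fun i => i.elim0⟩, ?_⟩
    rintro ⟨h, rfl, rfl, -⟩
    rfl
  | cons b ds ih =>
    simp only [Walk, ih]
    constructor
    · rintro ⟨x, hux, h, rfl, rfl, hh⟩
      refine ⟨Fin.cons u h, rfl, rfl, Fin.cases ?_ fun i => ?_⟩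
      · simpa using hux
      · simpa [← Fin.succ_castSucc] using hh i
    · rintro ⟨h, rfl, rfl, hh⟩
      refine ⟨h 1, by simpa using hh 0, Fin.tail h, rfl, rfl, fun i => ?_⟩
      simpa [Fin.tail, ← Fin.succ_castSucc] using hh i.succ

lemma isDigraphHom_pathEdge_iff {ds : List Bool} {h : Fin (ds.length + 1) → V} :
    IsDigraphHom (pathEdge ds) E h ↔ ∀ i, OrientedEdge E (ds.get i) (h i.castSucc) (h i.succ) := by
  constructor
  · intro hh i
    unfold OrientedEdge
    split_ifs with hi
    · exact hh _ _ ⟨i, by rw [if_pos hi]; exact ⟨rfl, rfl⟩⟩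
    · exact hh _ _ ⟨i, by rw [if_neg hi]; exact ⟨rfl, rfl⟩⟩
  · rintro hh a b ⟨i, hab⟩
    have := hh i
    unfold OrientedEdge at this
    split_ifs at hab this
    all_goals obtain ⟨rfl, rfl⟩ := hab; exact this

lemma walk_of_isDigraphHom {ds : List Bool} {h : Fin (ds.length + 1) → V}
    (hh : IsDigraphHom (pathEdge ds) E h) : Walk E ds (h 0) (h (Fin.last _)) :=
  walk_iff_exists_fin.2 ⟨h, rfl, rfl, isDigraphHom_pathEdge_iff.1 hh⟩

lemma exists_isDigraphHom_of_walk {ds : List Bool} {u w : V} (huw : Walk E ds u w) :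
    ∃ h : Fin (ds.length + 1) → V, IsDigraphHom (pathEdge ds) E h ∧ h 0 = u := by
  obtain ⟨h, h0, -, hh⟩ := walk_iff_exists_fin.1 huw
  exact ⟨h, isDigraphHom_pathEdge_iff.2 hh, h0⟩

lemma Walk.level_eq {level : V → ℤ} (hlevel : ∀ a b, E a b → level b = level a + 1) :
    ∀ {ds : List Bool} {u w : V}, Walk E ds u w → level w = level u + netLength ds
  | [], _, _, rfl => by simp
  | b :: ds, u, w, ⟨x, hux, hxw⟩ => by
    have hx : level x = level u + if b then 1 else -1 := by
      cases b <;> simp only [OrientedEdge, Bool.false_eq_true, if_true, if_false] at hux ⊢ <;>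
        linarith [hlevel _ _ hux]
    rw [hxw.level_eq hlevel, hx, netLength_cons]
    ring

end Walk

end OrientedPath

open OrientedPath

namespace DVert

variable {D : Type} [DecidableEq D] {n : ℕ} {R : Set (Fin n → D)}

def level : DVert D n R → ℤ
  | Sum.inl _ => 0
  | Sum.inr (Sum.inl _) => n + 2
  | Sum.inr (Sum.inr w) => netLength ((pathDirs w.d w.r).take w.j)

lemma pathDirs_length_pos (d : D) (t : Fin n → D) : 0 < (pathDirs d t).length := by
  simp [pathDirs, QDirs]

lemma pathVert_zero (d : D) (t : Fin n → D) (ht : t ∈ R) : pathVert d t ht 0 = Sum.inl d :=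
  dif_pos rfl

lemma pathVert_length (d : D) (t : Fin n → D) (ht : t ∈ R) :
    pathVert d t ht (pathDirs d t).length = Sum.inr (Sum.inl ⟨t, ht⟩) :=
  (dif_neg (pathDirs_length_pos d t).ne').trans (dif_pos le_rfl)

lemma level_pathVert (d : D) (t : Fin n → D) (ht : t ∈ R) {j : ℕ}
    (hj : j ≤ (pathDirs d t).length) :
    level (pathVert d t ht j) = netLength ((pathDirs d t).take j) := by
  rcases Nat.eq_zero_or_pos j with rfl | hj0
  · simp [pathVert_zero, level]
  rcases hj.eq_or_lt with rfl | hjl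
  · rw [pathVert_length, List.take_length, pathDirs, netLength_QDirs]
    rfl
  · rw [show pathVert d t ht j = Sum.inr (Sum.inr ⟨d, t, ht, j, hj0, hjl⟩) from
      (dif_neg hj0.ne').trans (dif_neg (not_le.2 hjl))]
    rfl

lemma level_of_DEdge {a b : DVert D n R} (hab : DEdge a b) : level b = level a + 1 := by
  obtain ⟨d, t, ht, i, hi, hab⟩ := hab
  have hstep := netLength_take_add_one _ i hi
  rw [← level_pathVert d t ht hi.le, ← level_pathVert d t ht hi] at hstep
  split_ifs at hab hstep
  all_goals obtain ⟨rfl, rfl⟩ := hab; linarith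

lemma level_le (v : DVert D n R) : level v ≤ n + 2 := by
  rcases v with _ | _ | w
  · show (0 : ℤ) ≤ n + 2
    positivity
  · exact le_rfl
  · exact (netLength_take_QDirs_mem _ w.hj0).2

lemma one_le_level_inr (x : {t : Fin n → D // t ∈ R} ⊕ InnerVert D n R) :
    1 ≤ level (Sum.inr x : DVert D n R) := by
  rcases x with _ | w
  · show (1 : ℤ) ≤ n + 2
    omega
  · exact (netLength_take_QDirs_mem _ w.hj0).1

lemma walk_pathDirs (d : D) (t : Fin n → D) (ht : t ∈ R) :
    Walk DEdge (pathDirs d t) (Sum.inl d : DVert D n R) (Sum.inr (Sum.inl ⟨t, ht⟩)) := by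
  refine walk_iff_exists_fin.2 ⟨fun j => pathVert d t ht j, pathVert_zero d t ht,
    pathVert_length d t ht, fun i => ?_⟩
  unfold OrientedEdge
  split_ifs with hi
  · exact ⟨d, t, ht, i, i.2, by rw [if_pos hi]; exact ⟨rfl, rfl⟩⟩
  · exact ⟨d, t, ht, i, i.2, by rw [if_neg hi]; exact ⟨rfl, rfl⟩⟩

end DVert

open DVert

theorem image_initial_Qempty_iff_base_general {D : Type} [DecidableEq D] {n : ℕ}
    (R : Set (Fin n → D)) (hR : R.Nonempty) (v : DVert D n R) :
    (∃ h : Fin ((QDirs n ∅).length + 1) → DVert D n R,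
        IsDigraphHom (pathEdge (QDirs n ∅)) DEdge h ∧ h 0 = v) ↔
      ∃ d : D, v = Sum.inl d := by
  constructor
  · rintro ⟨h, hh, rfl⟩
    have hclimb := (walk_of_isDigraphHom hh).level_eq fun _ _ hab => level_of_DEdge hab
    rw [netLength_QDirs] at hclimb
    rcases hv : h 0 with d | x
    · exact ⟨d, rfl⟩
    · have := one_le_level_inr x
      linarith [level_le (h (Fin.last _)), hv ▸ hclimb]
  · rintro ⟨d, rfl⟩
    obtain ⟨t, ht⟩ := hR
    exact exists_isDigraphHom_of_walk (walk_QDirs_empty_of_walk_QDirs (walk_pathDirs d t ht))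

/-- a vertex of `𝒟(R)` is the image of the initial vertex of `Q_∅`
under a homomorphism `Q_∅ → 𝒟(R)` iff it is a base vertex (an element of `D`). -/
theorem image_initial_Qempty_iff_base {D : Type} [Fintype D] [DecidableEq D] {n : ℕ}
    (hn : 1 ≤ n) (R : Set (Fin n → D)) (hR : R.Nonempty) (v : DVert D n R) :
    (∃ h : Fin ((QDirs n ∅).length + 1) → DVert D n R,
        IsDigraphHom (pathEdge (QDirs n ∅)) DEdge h ∧ h 0 = v) ↔
      ∃ d : D, v = Sum.inl d :=
  image_initial_Qempty_iff_base_general R hR v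
end

section
/- Let n ≥ 1 and S, S' ⊆ {1,…,n}. There exists a digraph homomorphism from Q_S to Q_{S'} mapping the initial vertex of Q_S to the initial vertex of Q_{S'} and the terminal vertex of Q_S to the terminal vertex of Q_{S'} if and only if S ⊆ S'. -/
/-!
The level of a vertex of an oriented path is the number of forward minus backward edges
before it, and a homomorphism fixing the initial vertex preserves levels. If `l ∈ S`, the
single edge of the `l`-th block of `Q_S` and the forward edges on either side of it form a
directed path `x → u → v → y` with `u` at level `l + 1`. If `l ∉ S'`, the vertices of `Q_{S'}`
before the `l`-th block have level `≤ l + 1` and those after it level `≥ l + 2`, so such a path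
would have to pass through the middle vertex of the zigzag, which has no incoming edge.
Conversely, if `S ⊆ S'`, fold every zigzag of `Q_S` facing a single edge of `Q_{S'}` onto it
(`i ↦ i % 2`) and map the other blocks identically; endpoint-fixing homomorphisms of oriented
paths concatenate.
-/

namespace OrientedPath

/-- `pathEdge ds` on the vertices `0, …, ds.length` viewed in `ℕ`; `ds[i]?` is `none` out of
range, so no arc leaves this set. -/
def Arc (ds : List Bool) (a b : ℕ) : Prop :=
  (ds[a]? = some true ∧ b = a + 1) ∨ (ds[b]? = some false ∧ a = b + 1)

def height (d : List Bool) : ℤ := d.count true - d.count false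

structure IsHom (ds ds' : List Bool) (g : ℕ → ℕ) : Prop where
  map_zero : g 0 = 0
  map_length : g ds.length = ds'.length
  map_arc : ∀ a b, Arc ds a b → Arc ds' (g a) (g b)

def HasRiseAt (ds : List Bool) (L : ℤ) : Prop :=
  ∃ x u v y, Arc ds x u ∧ Arc ds u v ∧ Arc ds v y ∧ height (ds.take u) = L

section Arc

variable {ds : List Bool} {a b : ℕ}

theorem Arc.le_length (h : Arc ds a b) : a ≤ ds.length ∧ b ≤ ds.length := by
  rcases h with ⟨h, rfl⟩ | ⟨h, rfl⟩ <;>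
    have := (List.getElem?_eq_some_iff.1 h).1 <;> omega

theorem Arc.le_succ (h : Arc ds a b) : b ≤ a + 1 := by
  rcases h with ⟨-, rfl⟩ | ⟨-, rfl⟩ <;> omega

theorem arc_or_arc_succ (h : a < ds.length) : Arc ds a (a + 1) ∨ Arc ds (a + 1) a := by
  rcases hb : ds[a] with _ | _
  · exact .inr (.inr ⟨by simp [h, hb], rfl⟩)
  · exact .inl (.inl ⟨by simp [h, hb], rfl⟩)

theorem arc_append_left {d : List Bool} (h : Arc ds a b) : Arc (ds ++ d) a b := by
  have := h.le_length
  rcases h with ⟨h, rfl⟩ | ⟨h, rfl⟩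
  · exact .inl ⟨by rwa [List.getElem?_append_left (by omega)], rfl⟩
  · exact .inr ⟨by rwa [List.getElem?_append_left (by omega)], rfl⟩

theorem arc_append_right {d : List Bool} (h : Arc ds a b) :
    Arc (d ++ ds) (a + d.length) (b + d.length) := by
  rcases h with ⟨h, rfl⟩ | ⟨h, rfl⟩
  · exact .inl ⟨by rwa [List.getElem?_append_right (by omega), Nat.add_sub_cancel], by omega⟩
  · exact .inr ⟨by rwa [List.getElem?_append_right (by omega), Nat.add_sub_cancel], by omega⟩

theorem Arc.of_append {d : List Bool} (h : Arc (ds ++ d) a b) :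
    Arc ds a b ∨ ds.length ≤ a ∧ ds.length ≤ b ∧ Arc d (a - ds.length) (b - ds.length) := by
  rcases h with ⟨h, rfl⟩ | ⟨h, rfl⟩
  · by_cases ha : a < ds.length
    · exact .inl (.inl ⟨by rwa [List.getElem?_append_left ha] at h, rfl⟩)
    · rw [List.getElem?_append_right (by omega)] at h
      exact .inr ⟨by omega, by omega, .inl ⟨h, by omega⟩⟩
  · by_cases hb : b < ds.length
    · exact .inl (.inr ⟨by rwa [List.getElem?_append_left hb] at h, rfl⟩)
    · rw [List.getElem?_append_right (by omega)] at h
      exact .inr ⟨by omega, by omega, .inr ⟨h, by omega⟩⟩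

end Arc

section Height

@[simp] theorem height_nil : height [] = 0 := rfl

@[simp] theorem height_cons (b : Bool) (d : List Bool) :
    height (b :: d) = (if b then 1 else -1) + height d := by
  cases b <;> simp [height] <;> ring

theorem height_append (d₁ d₂ : List Bool) : height (d₁ ++ d₂) = height d₁ + height d₂ := by
  simp only [height, List.count_append]; push_cast; ring

theorem height_take_append (d₁ d₂ : List Bool) (i : ℕ) :
    height ((d₁ ++ d₂).take i) = height (d₁.take i) + height (d₂.take (i - d₁.length)) := by
  rw [List.take_append, height_append]

theorem Arc.height_take {ds : List Bool} {a b : ℕ} (h : Arc ds a b) :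
    height (ds.take b) = height (ds.take a) + 1 := by
  rcases h with ⟨h, rfl⟩ | ⟨h, rfl⟩ <;> simp [List.take_add_one, h, height_append]

end Height

namespace IsHom

variable {ds ds' : List Bool} {g : ℕ → ℕ}

theorem le_length (hg : IsHom ds ds' g) {i : ℕ} (hi : i ≤ ds.length) : g i ≤ ds'.length := by
  obtain hi | hi := hi.lt_or_eq
  · rcases arc_or_arc_succ hi with h | h
    · exact (hg.map_arc _ _ h).le_length.1
    · exact (hg.map_arc _ _ h).le_length.2
  · rw [hi, hg.map_length]

theorem height_take (hg : IsHom ds ds' g) {i : ℕ} (hi : i ≤ ds.length) :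
    height (ds'.take (g i)) = height (ds.take i) := by
  induction i with
  | zero => simp [hg.map_zero]
  | succ i ih =>
    have ih := ih (by omega)
    rcases arc_or_arc_succ (ds := ds) (a := i) (by omega) with h | h
    · have := (hg.map_arc _ _ h).height_take; have := h.height_take; omega
    · have := (hg.map_arc _ _ h).height_take; have := h.height_take; omega

theorem hasRiseAt (hg : IsHom ds ds' g) {L : ℤ} (h : HasRiseAt ds L) : HasRiseAt ds' L := by
  obtain ⟨x, u, v, y, hxu, huv, hvy, hu⟩ := h
  exact ⟨g x, g u, g v, g y, hg.map_arc _ _ hxu, hg.map_arc _ _ huv, hg.map_arc _ _ hvy,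
    (hg.height_take huv.le_length.1).trans hu⟩

theorem append {d₁ d₁' d₂ d₂' : List Bool} {g₁ g₂ : ℕ → ℕ}
    (h₁ : IsHom d₁ d₁' g₁) (h₂ : IsHom d₂ d₂' g₂) :
    IsHom (d₁ ++ d₂) (d₁' ++ d₂')
      (fun a => if a ≤ d₁.length then g₁ a else g₂ (a - d₁.length) + d₁'.length) := by
  have right (a : ℕ) : (if a + d₁.length ≤ d₁.length then g₁ (a + d₁.length)
      else g₂ (a + d₁.length - d₁.length) + d₁'.length) = g₂ a + d₁'.length := by
    split_ifs with ha
    · obtain rfl : a = 0 := by omega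
      simp [h₁.map_length, h₂.map_zero]
    · simp
  refine ⟨by simp [h₁.map_zero], ?_, fun a b hab => ?_⟩
  · simp only [List.length_append]
    rw [Nat.add_comm d₁.length, right, h₂.map_length, Nat.add_comm]
  · rcases hab.of_append with hab | ⟨ha, hb, hab⟩
    · have := hab.le_length
      simpa [if_pos this.1, if_pos this.2] using arc_append_left (h₁.map_arc _ _ hab)
    · obtain ⟨a, rfl⟩ := Nat.exists_eq_add_of_le' ha
      obtain ⟨b, rfl⟩ := Nat.exists_eq_add_of_le' hb
      simp only [Nat.add_sub_cancel] at hab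
      simpa only [right] using arc_append_right (h₂.map_arc _ _ hab)

end IsHom

theorem isHom_id (ds : List Bool) : IsHom ds ds id :=
  ⟨rfl, rfl, fun _ _ h => h⟩

theorem isHom_zigzag_edge : IsHom [true, false, true] [true] (· % 2) := by
  refine ⟨rfl, rfl, fun a b h => ?_⟩
  have := h.le_length
  simp only [List.length_cons, List.length_nil] at this
  obtain ⟨ha, hb⟩ := this
  interval_cases a <;> interval_cases b <;> simp_all [Arc]

theorem exists_isHom_flatMap {α : Type*} {L : List α} {f f' : α → List Bool}
    (h : ∀ x ∈ L, ∃ g, IsHom (f x) (f' x) g) : ∃ g, IsHom (L.flatMap f) (L.flatMap f') g := by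
  induction L with
  | nil => exact ⟨id, isHom_id []⟩
  | cons x L ih =>
    obtain ⟨g₁, h₁⟩ := h x (by simp)
    obtain ⟨g₂, h₂⟩ := ih fun y hy => h y (by simp [hy])
    exact ⟨_, h₁.append h₂⟩

theorem hasRiseAt_append {P R : List Bool} (hP : P.getLast? = some true)
    (hR : R.head? = some true) : HasRiseAt (P ++ true :: R) (height P) := by
  have hpos : 0 < P.length := List.length_pos_iff.2 (by rintro rfl; simp at hP)
  refine ⟨P.length - 1, P.length, P.length + 1, P.length + 2, .inl ⟨?_, by omega⟩,
    .inl ⟨?_, rfl⟩, .inl ⟨?_, rfl⟩, by rw [List.take_left]⟩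
  · rwa [List.getElem?_append_left (by omega), ← List.getLast?_eq_getElem?]
  · simp
  · rwa [List.getElem?_append_right (by omega), Nat.add_sub_cancel_left,
      List.getElem?_cons_succ, ← List.head?_eq_getElem?]

theorem not_hasRiseAt_append_zigzag {P R : List Bool}
    (hP : ∀ i, height (P.take i) ≤ height P) (hR : ∀ j, 0 ≤ height (R.take j)) :
    ¬ HasRiseAt (P ++ ([true, false, true] ++ R)) (height P) := by
  set Q := P ++ ([true, false, true] ++ R)
  have hZ : ∀ k, height ([true, false, true].take k) ≤ 1 := by
    rintro (_ | _ | _ | k) <;> simp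
  have below (i : ℕ) (hi : i ≤ P.length + 3) : height (Q.take i) ≤ height P + 1 := by
    rw [height_take_append, height_take_append,
      show i - P.length - [true, false, true].length = 0 by simp; omega]
    have := hP i; have := hZ (i - P.length); simp only [List.take_zero, height_nil]; omega
  have above (i : ℕ) (hi : P.length + 3 ≤ i) : height P + 1 ≤ height (Q.take i) := by
    rw [height_take_append, height_take_append, List.take_of_length_le (by omega),
      List.take_of_length_le (by simp; omega)]
    have := hR (i - P.length - 3); simp at this ⊢; omega
  rintro ⟨x, u, v, y, hxu, huv, hvy, hu⟩
  have hy := hvy.height_take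
  have hv := huv.height_take
  have hu_le : u ≤ P.length + 2 := by
    by_contra! h; have := above u (by omega); omega
  have hy_ge : P.length + 4 ≤ y := by
    by_contra! h; have := below y (by omega); omega
  have := huv.le_succ
  have := hvy.le_succ
  obtain rfl : u = P.length + 2 := by omega
  rcases hxu with ⟨h, hx⟩ | ⟨h, -⟩
  · obtain rfl : x = P.length + 1 := by omega
    simp [Q] at h
  · simp [Q] at h

structure IsBump (B : List Bool) : Prop where
  head?_eq : B.head? = some true
  getLast?_eq : B.getLast? = some true
  height_eq : height B = 1
  height_take_bounds : ∀ i, 0 ≤ height (B.take i) ∧ height (B.take i) ≤ 1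

section Bumps

variable {Bs : List (List Bool)}

theorem height_flatten_of_isBump (hBs : ∀ B ∈ Bs, IsBump B) :
    height Bs.flatten = Bs.length := by
  induction Bs with
  | nil => rfl
  | cons B Bs ih =>
    rw [List.flatten_cons, height_append, (hBs B (by simp)).height_eq,
      ih fun B' hB' => hBs B' (by simp [hB'])]
    simp [add_comm]

theorem height_take_flatten_of_isBump (hBs : ∀ B ∈ Bs, IsBump B) (i : ℕ) :
    0 ≤ height (Bs.flatten.take i) ∧ height (Bs.flatten.take i) ≤ Bs.length := by
  induction Bs generalizing i with
  | nil => simp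
  | cons B Bs ih =>
    have hB := hBs B (by simp)
    have hBs' : ∀ B' ∈ Bs, IsBump B' := fun B' hB' => hBs B' (by simp [hB'])
    rw [List.flatten_cons, height_take_append]
    by_cases hi : i ≤ B.length
    · rw [Nat.sub_eq_zero_of_le hi]
      have := hB.height_take_bounds i
      simp only [List.take_zero, height_nil, List.length_cons]; omega
    · rw [List.take_of_length_le (by omega), hB.height_eq]
      have := ih hBs' (i - B.length); simp only [List.length_cons]; push_cast; omega

theorem head?_flatten_of_isBump (hBs : ∀ B ∈ Bs, IsBump B) (hne : Bs ≠ []) :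
    Bs.flatten.head? = some true := by
  obtain ⟨B, Bs, rfl⟩ := List.exists_cons_of_ne_nil hne
  simp [(hBs B (by simp)).head?_eq]

theorem getLast?_flatten_of_isBump (hBs : ∀ B ∈ Bs, IsBump B) (hne : Bs ≠ []) :
    Bs.flatten.getLast? = some true := by
  obtain rfl | ⟨Bs, B, rfl⟩ := List.eq_nil_or_concat Bs
  · exact absurd rfl hne
  · simp [(hBs B (by simp)).getLast?_eq]

end Bumps

theorem pathEdge_iff_arc (ds : List Bool) (a b : Fin (ds.length + 1)) :
    pathEdge ds a b ↔ Arc ds a b := by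
  simp only [pathEdge, Arc, List.get_eq_getElem]
  constructor
  · rintro ⟨i, hi⟩
    cases hd : ds[(i : ℕ)] <;> simp only [hd] at hi <;> obtain ⟨rfl, rfl⟩ := hi <;> simp [hd]
  · rintro (⟨h, hb⟩ | ⟨h, ha⟩) <;> obtain ⟨hlt, hd⟩ := List.getElem?_eq_some_iff.1 h
    · exact ⟨⟨a, hlt⟩, by simp [hd, Fin.ext_iff, hb]⟩
    · exact ⟨⟨b, hlt⟩, by simp [hd, Fin.ext_iff, ha]⟩

theorem exists_pathEdge_hom_iff_exists_isHom (ds ds' : List Bool) :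
    (∃ h : Fin (ds.length + 1) → Fin (ds'.length + 1),
      IsDigraphHom (pathEdge ds) (pathEdge ds') h ∧ h 0 = 0 ∧ h (Fin.last _) = Fin.last _) ↔
    ∃ g, IsHom ds ds' g := by
  constructor
  · rintro ⟨h, hom, h0, hlast⟩
    refine ⟨fun a => if ha : a < ds.length + 1 then h ⟨a, ha⟩ else 0, ?_, ?_, fun a b hab => ?_⟩
    · simp only [Nat.zero_lt_succ, dite_true]
      exact congrArg Fin.val h0
    · simp only [Nat.lt_succ_self, dite_true]
      exact congrArg Fin.val hlast
    · obtain ⟨ha, hb⟩ := hab.le_length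
      have := hom ⟨a, by omega⟩ ⟨b, by omega⟩ ((pathEdge_iff_arc ds _ _).2 hab)
      simpa [Nat.lt_succ_of_le ha, Nat.lt_succ_of_le hb] using (pathEdge_iff_arc ds' _ _).1 this
  · rintro ⟨g, hg⟩
    refine ⟨fun a => ⟨g a, Nat.lt_succ_of_le (hg.le_length a.is_le)⟩, fun a b hab => ?_,
      Fin.ext hg.map_zero, Fin.ext hg.map_length⟩
    exact (pathEdge_iff_arc ds' _ _).2 (hg.map_arc _ _ ((pathEdge_iff_arc ds _ _).1 hab))

end OrientedPath

open OrientedPath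

section QPaths

variable {n : ℕ}

def QBlock (S : Finset (Fin n)) (l : Fin n) : List Bool :=
  if l ∈ S then [true] else [true, false, true]

theorem QDirs_eq (S : Finset (Fin n)) :
    QDirs n S = [true] ++ ((List.finRange n).flatMap (QBlock S) ++ [true]) := rfl

theorem exists_isHom_QDirs {S S' : Finset (Fin n)} (hSS' : S ⊆ S') :
    ∃ g, IsHom (QDirs n S) (QDirs n S') g := by
  have hblock (l : Fin n) : ∃ g, IsHom (QBlock S l) (QBlock S' l) g := by
    by_cases hl : l ∈ S
    · simp only [QBlock, hl, hSS' hl]; exact ⟨id, isHom_id _⟩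
    by_cases hl' : l ∈ S'
    · simp only [QBlock, hl, hl']; exact ⟨_, isHom_zigzag_edge⟩
    · simp only [QBlock, hl, hl']; exact ⟨id, isHom_id _⟩
  obtain ⟨g, hg⟩ := exists_isHom_flatMap fun l _ => hblock l
  rw [QDirs_eq, QDirs_eq]
  exact ⟨_, (isHom_id _).append (hg.append (isHom_id _))⟩

def QBlocks (S : Finset (Fin n)) : List (List Bool) :=
  [true] :: ((List.finRange n).map (QBlock S) ++ [[true]])

theorem isBump_of_mem_QBlocks {S : Finset (Fin n)} {B : List Bool} (hB : B ∈ QBlocks S) :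
    IsBump B := by
  have hone : IsBump [true] := ⟨rfl, rfl, rfl, by rintro (_ | _) <;> simp⟩
  simp only [QBlocks, List.mem_cons, List.mem_append, List.mem_map, List.not_mem_nil,
    or_false] at hB
  obtain rfl | ⟨l, -, rfl⟩ | rfl := hB
  · exact hone
  · unfold QBlock
    split_ifs
    · exact hone
    · exact ⟨rfl, rfl, rfl, by rintro (_ | _ | _ | _) <;> simp⟩
  · exact hone

theorem hasRiseAt_QDirs_iff (S : Finset (Fin n)) (l : Fin n) :
    HasRiseAt (QDirs n S) ((l : ℕ) + 1) ↔ l ∈ S := by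
  set Bs := QBlocks S
  have hBs : ∀ B ∈ Bs, IsBump B := fun B => isBump_of_mem_QBlocks
  have hlen : Bs.length = n + 2 := by simp [Bs, QBlocks]
  have hl : (l : ℕ) + 1 < Bs.length := by omega
  have hsplit : QDirs n S =
      (Bs.take (l + 1)).flatten ++ (QBlock S l ++ (Bs.drop (l + 2)).flatten) := by
    have hget : Bs[(l : ℕ) + 1] = QBlock S l := by
      simp [Bs, QBlocks, List.getElem_append_left]
    calc QDirs n S = Bs.flatten := by simp [QDirs_eq, Bs, QBlocks, List.flatMap_def]
      _ = (Bs.take (l + 1) ++ Bs.drop (l + 1)).flatten := by rw [List.take_append_drop]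
      _ = _ := by rw [List.drop_eq_getElem_cons hl, List.flatten_append, List.flatten_cons, hget]
  have hP : ∀ B ∈ Bs.take (l + 1), IsBump B := fun B hB => hBs B (List.mem_of_mem_take hB)
  have hR : ∀ B ∈ Bs.drop (l + 2), IsBump B := fun B hB => hBs B (List.mem_of_mem_drop hB)
  have hPheight : height (Bs.take (l + 1)).flatten = (l : ℕ) + 1 := by
    rw [height_flatten_of_isBump hP, List.length_take_of_le (by omega)]; push_cast; rfl
  rw [hsplit, ← hPheight]
  unfold QBlock
  split_ifs with hlS
  · simp only [hlS, iff_true]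
    exact hasRiseAt_append
      (getLast?_flatten_of_isBump hP (List.ne_nil_of_length_pos (by simp; omega)))
      (head?_flatten_of_isBump hR (by simp [List.drop_eq_nil_iff]; omega))
  · simp only [hlS, iff_false]
    exact not_hasRiseAt_append_zigzag
      (fun i => hPheight ▸ (height_take_flatten_of_isBump hP i).2.trans (by simp))
      (fun j => (height_take_flatten_of_isBump hR j).1)

end QPaths

theorem hom_QS_iff_subset_general (n : ℕ) (S S' : Finset (Fin n)) :
    (∃ h : Fin ((QDirs n S).length + 1) → Fin ((QDirs n S').length + 1),
      IsDigraphHom (pathEdge (QDirs n S)) (pathEdge (QDirs n S')) h ∧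
      h 0 = 0 ∧ h (Fin.last _) = Fin.last _) ↔ S ⊆ S' := by
  rw [exists_pathEdge_hom_iff_exists_isHom]
  constructor
  · rintro ⟨g, hg⟩ l hl
    exact (hasRiseAt_QDirs_iff S' l).1 (hg.hasRiseAt ((hasRiseAt_QDirs_iff S l).2 hl))
  · exact exists_isHom_QDirs

/-- there is a homomorphism `Q_S → Q_{S'}` sending the initial vertex to
the initial vertex and the terminal vertex to the terminal vertex iff `S ⊆ S'`. -/
theorem hom_QS_iff_subset (n : ℕ) (hn : 1 ≤ n) (S S' : Finset (Fin n)) :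
    (∃ h : Fin ((QDirs n S).length + 1) → Fin ((QDirs n S').length + 1),
      IsDigraphHom (pathEdge (QDirs n S)) (pathEdge (QDirs n S')) h ∧
      h 0 = 0 ∧ h (Fin.last _) = Fin.last _) ↔ S ⊆ S' :=
  hom_QS_iff_subset_general n S S'
end
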